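/- arXiv:1111.6185 — 2 statements merged into one kernel-verified Lean document; each statement's English description precedes it below -/
import Mathlib

section
/- The product and coproduct on the P-basis are compatible: for λ ∈ D_{2k}(q) and μ ∈ D_{2(n-k)}(q), Δ(P_λ · P_μ) = Δ(P_λ) · Δ(P_μ), where the product on SC^D ⊗ SC^D is componentwise. Consequently SC^D is a graded connected bialgebra, hence a Hopf algebra. -/
/-!
Index the subsets `A ⊆ [k+m]` by the pairs `(B, C)`, `B = A ∩ [k]`, `C = (A ∩ [k+1, k+m]) - k`.
The arcs of `λ` live on `±[k]` and those of `μ↑^k` on `±[k+1, k+m]`, so `A` splits `λ ⊔ μ↑^k`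
iff `B` splits `λ` and `C` splits `μ`, and `(λ ⊔ μ↑^k)|_A = λ|_B ⊔ (μ|_C)↑^k`. The rank of an
element in `A` is its rank in `B` below `k` and `|B|` plus its rank in `C` above `k`, so `st_A`
acts as `st_B` on the first part and as `st_C` followed by the shift by `|B|` on the second. The
complement `[k+m] \ A` corresponds to `([k] \ B, [m] \ C)`, and the two sums agree term by term.
-/

open Finset
open scoped Classical

noncomputable section

/-- A labelled arc `(i, j, a)` on `[±n]` with label `a`. -/
abbrev Arc (F : Type*) := ℤ × ℤ × F

/-- Position of `i ∈ [±n] = {1,…,n,-n,…,-1}` in the total order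
`1 ≺ ⋯ ≺ n ≺ -n ≺ ⋯ ≺ -1` (so `posD n i = i` for `i > 0` and
`posD n (-m) = 2n + 1 - m`). -/
def posD (n : ℕ) (i : ℤ) : ℤ := if 0 < i then i else 2 * n + 1 + i

/-- `λ` is a `D_{2n}(q)`-partition of `[±n]`: a set of labelled arcs `(i,j,a)` with
`i, j ∈ [±n]`, `i ≺ j`, `j ≠ -i`, `a ≠ 0`, closed under the symmetry
`(i,j,a) ↦ (-j,-i,-a)`, and such that no arc `(i,k,b)` or `(k,j,b)` with
`i ≺ k ≺ j` coexists with an arc `(i,j,a)`. -/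
def IsDPartition {F : Type*} [Field F] (n : ℕ) (lam : Finset (Arc F)) : Prop :=
  ∀ i j a, (i, j, a) ∈ lam →
    1 ≤ |i| ∧ |i| ≤ (n : ℤ) ∧ 1 ≤ |j| ∧ |j| ≤ (n : ℤ) ∧ a ≠ 0 ∧
    posD n i < posD n j ∧ j ≠ -i ∧ (-j, -i, -a) ∈ lam ∧
    ∀ k b, posD n i < posD n k → posD n k < posD n j →
      (i, k, b) ∉ lam ∧ (k, j, b) ∉ lam

/-- Rank of `i` in a finite set `A ⊆ [n]` of positive integers:
the number of elements of `A` that are `≤ i`. -/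
def rankIn (A : Finset ℤ) (i : ℤ) : ℤ := ((A.filter (· ≤ i)).card : ℤ)

/-- The standardization map `st_A : ±A → [±|A|]`, the unique order-preserving
relabelling (extended arbitrarily off `±A`). -/
def stMap (A : Finset ℤ) (i : ℤ) : ℤ := if 0 < i then rankIn A i else -(rankIn A (-i))

/-- Standardization applied to a labelled arc. -/
def stArc {F : Type*} (A : Finset ℤ) : Arc F → Arc F :=
  fun t => (stMap A t.1, stMap A t.2.1, t.2.2)

/-- `λ|_A`: the arcs of `λ` with both endpoints in `±A = A ∪ (-A)`. -/
def restrictTo {F : Type*} (A : Finset ℤ) (lam : Finset (Arc F)) : Finset (Arc F) :=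
  lam.filter (fun t => |t.1| ∈ A ∧ |t.2.1| ∈ A)

/-- Relabel all arcs of `λ` via `st_A`. -/
def standardize {F : Type*} (A : Finset ℤ) (lam : Finset (Arc F)) : Finset (Arc F) :=
  lam.image (stArc A)

/-- Every arc of `λ` has both endpoints in `±A` or both in `±Aᶜ`,
i.e. `λ = λ|_A ⊔ λ|_{Aᶜ}`. -/
def Splits {F : Type*} (A : Finset ℤ) (lam : Finset (Arc F)) : Prop :=
  ∀ t ∈ lam, (|t.1| ∈ A ↔ |t.2.1| ∈ A)

/-- Shift of an index of `[±m]` into `[±(k+m)]`: `i ↦ k + i` for `i > 0` and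
`-i ↦ -(k + i)`. -/
def shiftZ (k : ℕ) (i : ℤ) : ℤ := if 0 < i then i + k else i - k

/-- Shift of a labelled arc by `k`. -/
def shiftArc {F : Type*} (k : ℕ) : Arc F → Arc F :=
  fun t => (shiftZ k t.1, shiftZ k t.2.1, t.2.2)

/-- `μ↑^k`: the shift of a `D`-partition `μ` of `[±m]` into `[±(k+m)]`, sending each arc
`(i,j,a)` with `i,j > 0` to `(k+i, k+j, a)`, each `(i,-j,a)` to `(k+i, -(k+j), a)`, and
symmetrically on negative endpoints. -/
def shiftUp {F : Type*} (k : ℕ) (mu : Finset (Arc F)) : Finset (Arc F) :=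
  mu.image (shiftArc k)

section LowHigh

variable {k m : ℕ} {A B C : Finset ℤ} {x : ℤ}

lemma card_Icc_one_natCast (n : ℕ) : #(Icc (1 : ℤ) n) = n := by
  simp

def lowPart (k : ℕ) (A : Finset ℤ) : Finset ℤ := A.filter (· ≤ (k : ℤ))

def highPart (k : ℕ) (A : Finset ℤ) : Finset ℤ :=
  (A.filter ((k : ℤ) < ·)).image (· - (k : ℤ))

lemma mem_lowPart : x ∈ lowPart k A ↔ x ∈ A ∧ x ≤ k := mem_filter

lemma mem_highPart : x ∈ highPart k A ↔ x + k ∈ A ∧ 0 < x := by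
  simp only [highPart, mem_image, mem_filter]
  constructor
  · rintro ⟨y, ⟨hy, hky⟩, rfl⟩
    exact ⟨by simpa using hy, by omega⟩
  · rintro ⟨hx, hpos⟩
    exact ⟨x + k, ⟨hx, by omega⟩, by ring⟩

lemma card_lowPart_add_card_highPart (k : ℕ) (A : Finset ℤ) :
    #(lowPart k A) + #(highPart k A) = #A := by
  rw [highPart, card_image_of_injective _ (sub_left_injective (b := (k : ℤ))), lowPart,
    ← card_filter_add_card_filter_not (s := A) (· ≤ (k : ℤ))]
  simp only [not_le]

lemma lowPart_union_image_highPart (k : ℕ) (A : Finset ℤ) :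
    lowPart k A ∪ (highPart k A).image (· + (k : ℤ)) = A := by
  ext x
  simp only [mem_union, mem_image, mem_lowPart, mem_highPart]
  constructor
  · rintro (⟨hx, -⟩ | ⟨y, ⟨hy, -⟩, rfl⟩) <;> assumption
  · intro hx
    by_cases hxk : x ≤ k
    · exact Or.inl ⟨hx, hxk⟩
    · exact Or.inr ⟨x - k, ⟨by simpa using hx, by omega⟩, by ring⟩

lemma lowPart_union_image (hB : ∀ x ∈ B, x ≤ k) (hC : ∀ x ∈ C, 0 < x) :
    lowPart k (B ∪ C.image (· + (k : ℤ))) = B := by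
  ext x
  simp only [mem_lowPart, mem_union, mem_image]
  constructor
  · rintro ⟨hx | ⟨y, hy, rfl⟩, hxk⟩
    · exact hx
    · exact absurd (hC y hy) (by omega)
  · exact fun hx => ⟨Or.inl hx, hB x hx⟩

lemma highPart_union_image (hB : ∀ x ∈ B, x ≤ k) (hC : ∀ x ∈ C, 0 < x) :
    highPart k (B ∪ C.image (· + (k : ℤ))) = C := by
  ext x
  simp only [mem_highPart, mem_union, mem_image, add_left_inj, exists_eq_right]
  constructor
  · rintro ⟨hx | hx, hpos⟩
    · exact absurd (hB _ hx) (by omega)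
    · exact hx
  · exact fun hx => ⟨Or.inr hx, hC x hx⟩

lemma lowPart_subset (hA : A ⊆ Icc 1 ((k : ℤ) + m)) : lowPart k A ⊆ Icc 1 (k : ℤ) := by
  intro x hx
  rw [mem_lowPart] at hx
  have := mem_Icc.mp (hA hx.1)
  exact mem_Icc.mpr ⟨this.1, hx.2⟩

lemma highPart_subset (hA : A ⊆ Icc 1 ((k : ℤ) + m)) : highPart k A ⊆ Icc 1 (m : ℤ) := by
  intro x hx
  rw [mem_highPart] at hx
  have := mem_Icc.mp (hA hx.1)
  exact mem_Icc.mpr ⟨by omega, by omega⟩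

lemma lowPart_sdiff (k m : ℕ) (A : Finset ℤ) :
    lowPart k (Icc 1 ((k : ℤ) + m) \ A) = Icc 1 (k : ℤ) \ lowPart k A := by
  ext x
  simp only [mem_lowPart, mem_sdiff, mem_Icc]
  constructor
  · rintro ⟨⟨⟨h1, -⟩, hA⟩, hk⟩
    exact ⟨⟨h1, hk⟩, fun h => hA h.1⟩
  · rintro ⟨⟨h1, hk⟩, hA⟩
    exact ⟨⟨⟨h1, by omega⟩, fun h => hA ⟨h, hk⟩⟩, hk⟩

lemma highPart_sdiff (k m : ℕ) (A : Finset ℤ) :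
    highPart k (Icc 1 ((k : ℤ) + m) \ A) = Icc 1 (m : ℤ) \ highPart k A := by
  ext x
  simp only [mem_highPart, mem_sdiff, mem_Icc]
  constructor
  · rintro ⟨⟨⟨-, hm⟩, hA⟩, hpos⟩
    exact ⟨⟨hpos, by omega⟩, fun h => hA h.1⟩
  · rintro ⟨⟨h1, hm⟩, hA⟩
    exact ⟨⟨⟨by omega, by omega⟩, fun h => hA ⟨h, h1⟩⟩, h1⟩

lemma union_image_add_subset_Icc (hB : B ⊆ Icc 1 (k : ℤ))
    (hC : C ⊆ Icc 1 (m : ℤ)) : B ∪ C.image (· + (k : ℤ)) ⊆ Icc 1 ((k : ℤ) + m) := by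
  refine union_subset (fun x hx => ?_) (image_subset_iff.mpr fun x hx => ?_)
  · have := mem_Icc.mp (hB hx)
    exact mem_Icc.mpr ⟨this.1, by omega⟩
  · have := mem_Icc.mp (hC hx)
    exact mem_Icc.mpr ⟨by omega, by omega⟩

lemma sum_powerset_Icc_add {M : Type*} [AddCommMonoid M] (k m : ℕ)
    (f : Finset ℤ → Finset ℤ → M) :
    ∑ A ∈ (Icc 1 ((k : ℤ) + m)).powerset, f (lowPart k A) (highPart k A)
      = ∑ B ∈ (Icc 1 (k : ℤ)).powerset, ∑ C ∈ (Icc 1 (m : ℤ)).powerset, f B C := by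
  rw [← sum_product']
  refine sum_nbij' (fun A => (lowPart k A, highPart k A)) (fun p => p.1 ∪ p.2.image (· + (k : ℤ)))
    (fun A hA => ?_) (fun p hp => ?_) (fun A _ => lowPart_union_image_highPart k A)
    (fun p hp => ?_) (fun _ _ => rfl)
  · rw [mem_powerset] at hA
    exact mem_product.mpr ⟨mem_powerset.mpr (lowPart_subset hA),
      mem_powerset.mpr (highPart_subset hA)⟩
  · obtain ⟨hB, hC⟩ := mem_product.mp hp
    exact mem_powerset.mpr (union_image_add_subset_Icc (mem_powerset.mp hB) (mem_powerset.mp hC))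
  · obtain ⟨hB, hC⟩ := mem_product.mp hp
    have hB' : ∀ x ∈ p.1, x ≤ k := fun x hx => (mem_Icc.mp (mem_powerset.mp hB hx)).2
    have hC' : ∀ x ∈ p.2, 0 < x := fun x hx => (mem_Icc.mp (mem_powerset.mp hC hx)).1
    exact Prod.ext (lowPart_union_image hB' hC') (highPart_union_image hB' hC')

end LowHigh

section Standardization

variable {k : ℕ} {A : Finset ℤ} {i j : ℤ}

lemma rankIn_lowPart (hi : i ≤ k) : rankIn (lowPart k A) i = rankIn A i := by
  rw [rankIn, rankIn, lowPart, filter_filter]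
  congr 3
  ext x
  constructor
  · exact fun h => h.2
  · exact fun h => ⟨by omega, h⟩

lemma rankIn_add (hj : 0 ≤ j) :
    rankIn A (k + j) = #(lowPart k A) + rankIn (highPart k A) j := by
  have hsplit : A.filter (· ≤ (k : ℤ) + j)
      = lowPart k A ∪ (A.filter ((k : ℤ) < ·)).filter (· ≤ (k : ℤ) + j) := by
    ext x
    by_cases hx : x ∈ A <;> simp only [lowPart, mem_filter, mem_union, hx, true_and, false_and,
      or_self]
    omega
  have hdisj : Disjoint (lowPart k A) ((A.filter ((k : ℤ) < ·)).filter (· ≤ (k : ℤ) + j)) := by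
    simp only [lowPart, disjoint_left, mem_filter]
    omega
  have hhigh : (highPart k A).filter (· ≤ j)
      = ((A.filter ((k : ℤ) < ·)).filter (· ≤ (k : ℤ) + j)).image (· - (k : ℤ)) := by
    rw [highPart, filter_image]
    congr 1
    exact filter_congr fun x _ => by omega
  rw [rankIn, rankIn, hsplit, card_union_of_disjoint hdisj, hhigh,
    card_image_of_injective _ (sub_left_injective (b := (k : ℤ)))]
  push_cast
  rfl

lemma one_le_rankIn (hi : i ∈ A) : 1 ≤ rankIn A i := by
  rw [rankIn, Nat.one_le_cast, Nat.one_le_iff_ne_zero, Ne, card_eq_zero]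
  exact ne_empty_of_mem (mem_filter.mpr ⟨hi, le_rfl⟩)

lemma stMap_lowPart (hi : |i| ≤ k) : stMap (lowPart k A) i = stMap A i := by
  obtain ⟨h1, h2⟩ := abs_le.mp hi
  unfold stMap
  split_ifs <;> rw [rankIn_lowPart (by omega)]

lemma stMap_of_pos (hi : 0 < i) : stMap A i = rankIn A i := if_pos hi

lemma stMap_of_neg (hi : i < 0) : stMap A i = -rankIn A (-i) := if_neg (by omega)

lemma shiftZ_of_pos (hi : 0 < i) : shiftZ k i = i + k := if_pos hi

lemma shiftZ_of_nonpos (hi : i ≤ 0) : shiftZ k i = i - k := if_neg (by omega)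

-- `|i| ∈ highPart k A` keeps the standardized index nonzero, so `shiftZ` treats its sign right.
lemma stMap_shiftZ (hi : |i| ∈ highPart k A) :
    stMap A (shiftZ k i) = shiftZ #(lowPart k A) (stMap (highPart k A) i) := by
  have hpos := (mem_highPart.mp hi).2
  have hrank := one_le_rankIn hi
  rcases lt_or_gt_of_ne (abs_pos.mp hpos) with h | h
  · rw [abs_of_neg h] at hrank
    rw [shiftZ_of_nonpos h.le, stMap_of_neg (by omega), stMap_of_neg h,
      shiftZ_of_nonpos (by omega), show -(i - k) = k + -i by ring, rankIn_add (by omega)]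
    ring
  · rw [abs_of_pos h] at hrank
    rw [shiftZ_of_pos h, stMap_of_pos (by omega), stMap_of_pos h, shiftZ_of_pos (by omega),
      add_comm i, rankIn_add h.le, add_comm]

lemma abs_shiftZ (k : ℕ) (hi : i ≠ 0) : |shiftZ k i| = |i| + k := by
  unfold shiftZ
  split_ifs with h
  · rw [abs_of_pos h, abs_of_pos (by omega)]
  · rw [abs_of_neg (by omega), abs_of_neg (by omega)]
    ring

lemma abs_shiftZ_mem_iff (hi : i ≠ 0) : |shiftZ k i| ∈ A ↔ |i| ∈ highPart k A := by
  rw [abs_shiftZ k hi, mem_highPart, iff_self_and]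
  exact fun _ => abs_pos.mpr hi

end Standardization

section Arcs

variable {F : Type*} {k : ℕ} {A : Finset ℤ} {lam mu : Finset (Arc F)}

def AbsEndpointsLE (k : ℕ) (lam : Finset (Arc F)) : Prop :=
  ∀ t ∈ lam, |t.1| ≤ k ∧ |t.2.1| ≤ k

def EndpointsNeZero (mu : Finset (Arc F)) : Prop :=
  ∀ t ∈ mu, t.1 ≠ 0 ∧ t.2.1 ≠ 0

lemma IsDPartition.absEndpointsLE [Field F] {n : ℕ} (h : IsDPartition n lam) :
    AbsEndpointsLE n lam := by
  rintro ⟨i, j, a⟩ ht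
  obtain ⟨-, hi, -, hj, -⟩ := h i j a ht
  exact ⟨hi, hj⟩

lemma IsDPartition.endpointsNeZero [Field F] {n : ℕ} (h : IsDPartition n mu) :
    EndpointsNeZero mu := by
  rintro ⟨i, j, a⟩ ht
  obtain ⟨hi, -, hj, -⟩ := h i j a ht
  exact ⟨abs_pos.mp hi, abs_pos.mp hj⟩

lemma splits_union {s t : Finset (Arc F)} :
    Splits A (s ∪ t) ↔ Splits A s ∧ Splits A t :=
  forall_mem_union

lemma splits_lowPart_iff (h : AbsEndpointsLE k lam) :
    Splits (lowPart k A) lam ↔ Splits A lam := by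
  refine forall₂_congr fun t ht => ?_
  simp only [mem_lowPart, (h t ht).1, (h t ht).2, and_true]

lemma splits_shiftUp_iff (h : EndpointsNeZero mu) :
    Splits A (shiftUp k mu) ↔ Splits (highPart k A) mu := by
  refine forall_mem_image.trans (forall₂_congr fun t ht => ?_)
  rw [shiftArc, abs_shiftZ_mem_iff (h t ht).1, abs_shiftZ_mem_iff (h t ht).2]

lemma restrictTo_union {s t : Finset (Arc F)} :
    restrictTo A (s ∪ t) = restrictTo A s ∪ restrictTo A t :=
  filter_union _ _ _

lemma restrictTo_lowPart (h : AbsEndpointsLE k lam) :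
    restrictTo (lowPart k A) lam = restrictTo A lam :=
  filter_congr fun t ht => by simp only [mem_lowPart, (h t ht).1, (h t ht).2, and_true]

lemma restrictTo_shiftUp (h : EndpointsNeZero mu) :
    restrictTo A (shiftUp k mu) = shiftUp k (restrictTo (highPart k A) mu) := by
  rw [restrictTo, shiftUp, filter_image]
  congr 1
  exact filter_congr fun t ht => by
    rw [shiftArc, abs_shiftZ_mem_iff (h t ht).1, abs_shiftZ_mem_iff (h t ht).2]

lemma standardize_union {s t : Finset (Arc F)} :
    standardize A (s ∪ t) = standardize A s ∪ standardize A t :=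
  image_union _ _

lemma standardize_restrictTo_lowPart :
    standardize A (restrictTo (lowPart k A) lam)
      = standardize (lowPart k A) (restrictTo (lowPart k A) lam) := by
  refine image_congr fun t ht => ?_
  obtain ⟨-, h1, h2⟩ := mem_filter.mp ht
  rw [stArc, stArc, stMap_lowPart (mem_lowPart.mp h1).2, stMap_lowPart (mem_lowPart.mp h2).2]

lemma standardize_shiftUp_restrictTo_highPart :
    standardize A (shiftUp k (restrictTo (highPart k A) mu))
      = shiftUp #(lowPart k A) (standardize (highPart k A) (restrictTo (highPart k A) mu)) := by
  rw [standardize, shiftUp, shiftUp, standardize, image_image, image_image]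
  refine image_congr fun t ht => ?_
  obtain ⟨-, h1, h2⟩ := mem_filter.mp ht
  simp only [Function.comp_apply, stArc, shiftArc, stMap_shiftZ h1, stMap_shiftZ h2]

lemma splits_union_shiftUp_iff (hlam : AbsEndpointsLE k lam) (hmu : EndpointsNeZero mu) :
    Splits A (lam ∪ shiftUp k mu) ↔ Splits (lowPart k A) lam ∧ Splits (highPart k A) mu := by
  rw [splits_union, splits_lowPart_iff hlam, splits_shiftUp_iff hmu]

lemma standardize_restrictTo_union_shiftUp (hlam : AbsEndpointsLE k lam)
    (hmu : EndpointsNeZero mu) :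
    standardize A (restrictTo A (lam ∪ shiftUp k mu))
      = standardize (lowPart k A) (restrictTo (lowPart k A) lam) ∪
          shiftUp #(lowPart k A) (standardize (highPart k A) (restrictTo (highPart k A) mu)) := by
  rw [restrictTo_union, restrictTo_shiftUp hmu, ← restrictTo_lowPart hlam, standardize_union,
    standardize_restrictTo_lowPart, standardize_shiftUp_restrictTo_highPart]

end Arcs

variable (F : Type*) [Field F] [Fintype F]

/-- All possible labelled arcs on `[±n]`. -/
def allArcs (n : ℕ) : Finset (Arc F) :=
  Icc (-(n : ℤ)) (n : ℤ) ×ˢ Icc (-(n : ℤ)) (n : ℤ) ×ˢ (Finset.univ : Finset F)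

/-- `SC^D = ⊕_{n ≥ 0} SC^D_{2n}`: the free graded `ℂ`-vector space with basis
`{κ_λ : λ ∈ D_{2n}(q), n ≥ 0}`. -/
abbrev SCtot := (Σ n : ℕ, {lam : Finset (Arc F) // IsDPartition n lam}) →₀ ℂ

/-- `P_λ = Σ_{μ ≥ λ} κ_μ ∈ SC^D_{2n}`, where `μ` runs over the `D_{2n}(q)`-partitions
whose arc set contains the arc set of `λ`. -/
def Pelt (n : ℕ) (lam : Finset (Arc F)) : SCtot F :=
  ∑ mu ∈ (allArcs F n).powerset,
    if h : IsDPartition n mu ∧ lam ⊆ mu then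
      Finsupp.single ⟨n, ⟨mu, h.1⟩⟩ (1 : ℂ) else 0

open scoped TensorProduct

noncomputable instance : Zero (SCtot F ⊗[ℂ] SCtot F) :=
  (inferInstance : AddCommMonoid (SCtot F ⊗[ℂ] SCtot F)).toAddMonoid.toZero

/-- The coproduct on the `P`-basis:
`Δ(P_λ) = Σ_{A ⊆ [n], λ = λ|_A ⊔ λ|_{Aᶜ}} P_{st_A(λ|_A)} ⊗ P_{st_{Aᶜ}(λ|_{Aᶜ})}`. -/
def DeltaP (n : ℕ) (lam : Finset (Arc F)) : SCtot F ⊗[ℂ] SCtot F :=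
  ∑ A ∈ (Icc 1 (n : ℤ)).powerset,
    if Splits A lam then
      Pelt F A.card (standardize A (restrictTo A lam)) ⊗ₜ[ℂ]
        Pelt F (n - A.card)
          (standardize (Icc 1 (n : ℤ) \ A) (restrictTo (Icc 1 (n : ℤ) \ A) lam))
    else 0

/-- compatibility of product and coproduct on the `P`-basis:
`Δ(P_λ · P_μ) = Δ(P_λ) · Δ(P_μ)` for `λ ∈ D_{2k}(q)`, `μ ∈ D_{2m}(q)`, where
`P_λ · P_μ = P_{λ ⊔ μ↑^k}` and the product on `SC^D ⊗ SC^D` is componentwise (so the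
right-hand side is the double sum of componentwise products of `P`-basis elements).
This is the bialgebra compatibility making `SC^D` a graded connected bialgebra, hence
a Hopf algebra. -/
theorem DeltaP_mul_compat (k m : ℕ) (lam mu : Finset (Arc F))
    (hlam : IsDPartition k lam) (hmu : IsDPartition m mu) :
    DeltaP F (k + m) (lam ∪ shiftUp k mu)
      = ∑ B ∈ (Icc 1 (k : ℤ)).powerset, ∑ C ∈ (Icc 1 (m : ℤ)).powerset,
          if Splits B lam ∧ Splits C mu then
            Pelt F (B.card + C.card)
              (standardize B (restrictTo B lam) ∪
                shiftUp B.card (standardize C (restrictTo C mu))) ⊗ₜ[ℂ]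
            Pelt F ((k - B.card) + (m - C.card))
              (standardize (Icc 1 (k : ℤ) \ B) (restrictTo (Icc 1 (k : ℤ) \ B) lam) ∪
                shiftUp (k - B.card)
                  (standardize (Icc 1 (m : ℤ) \ C) (restrictTo (Icc 1 (m : ℤ) \ C) mu)))
          else 0 := by
  rw [DeltaP, Nat.cast_add, ← sum_powerset_Icc_add]
  refine sum_congr rfl fun A hA => ?_
  rw [mem_powerset] at hA
  have hlam' := hlam.absEndpointsLE
  have hmu' := hmu.endpointsNeZero
  have hB := card_le_card (lowPart_subset hA)
  have hC := card_le_card (highPart_subset hA)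
  rw [card_Icc_one_natCast] at hB hC
  rw [splits_union_shiftUp_iff hlam' hmu', standardize_restrictTo_union_shiftUp hlam' hmu',
    standardize_restrictTo_union_shiftUp hlam' hmu', lowPart_sdiff, highPart_sdiff,
    card_sdiff_of_subset (lowPart_subset hA), card_Icc_one_natCast, ← card_lowPart_add_card_highPart k A,
    show k + m - (#(lowPart k A) + #(highPart k A))
      = k - #(lowPart k A) + (m - #(highPart k A)) by omega]
  -- the two sides differ only in the `Decidable` instances of their `if`s
  congr 1
end
end

section
/- In the κ-basis, the coproduct satisfies Δ(κ_λ) = Σ κ_{st_A(λ|_A)} ⊗ κ_{st_{A^c}(λ|_{A^c})}, summing over all A ⊆ [n] with λ = λ|_A ⊔ λ|_{A^c}, where Δ is defined on the P-basis by Δ(P_λ) = Σ_{A: λ = λ|_A ⊔ λ|_{A^c}} P_{st_A(λ|_A)} ⊗ P_{st_{A^c}(λ|_{A^c})} and the κ-basis is defined by P_λ = Σ_{μ ≥ λ} κ_μ. -/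
open Finset
open scoped Classical

noncomputable section

variable (F : Type*) [Field F] [Fintype F]

open scoped TensorProduct

/-- The superclass characteristic function `κ_λ` (a basis element of `SC^D`). -/
def kelt (n : ℕ) (lam : Finset (Arc F)) : SCtot F :=
  if h : IsDPartition n lam then Finsupp.single ⟨n, ⟨lam, h⟩⟩ (1 : ℂ) else 0

/-! ### Auxiliary development -/

section Aux

lemma rankIn_mono (A : Finset ℤ) {x y : ℤ} (h : x ≤ y) : rankIn A x ≤ rankIn A y := by
  unfold rankIn
  exact_mod_cast Finset.card_le_card
    (Finset.monotone_filter_right A (fun z _ (hz : z ≤ x) => hz.trans h))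

lemma rankIn_lt (A : Finset ℤ) {x y : ℤ} (hy : y ∈ A) (h : x < y) :
    rankIn A x < rankIn A y := by
  unfold rankIn
  have hsub : A.filter (· ≤ x) ⊂ A.filter (· ≤ y) := by
    refine ⟨Finset.monotone_filter_right A (fun z _ (hz : z ≤ x) => hz.trans h.le), ?_⟩
    intro hc
    have : y ∈ A.filter (· ≤ x) := hc (Finset.mem_filter.mpr ⟨hy, le_refl y⟩)
    exact absurd (Finset.mem_filter.mp this).2 (not_le.mpr h)
  exact_mod_cast Finset.card_lt_card hsub

lemma rankIn_lt_iff {A : Finset ℤ} {x y : ℤ} (hx : x ∈ A) (hy : y ∈ A) :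
    rankIn A x < rankIn A y ↔ x < y := by
  constructor
  · intro hr
    by_contra hc
    exact absurd (rankIn_mono A (not_lt.mp hc)) (not_le.mpr hr)
  · exact rankIn_lt A hy

lemma rankIn_inj {A : Finset ℤ} {x y : ℤ} (hx : x ∈ A) (hy : y ∈ A)
    (h : rankIn A x = rankIn A y) : x = y := by
  rcases lt_trichotomy x y with hc | hc | hc
  · exact absurd ((rankIn_lt_iff hx hy).mpr hc) (by omega)
  · exact hc
  · exact absurd ((rankIn_lt_iff hy hx).mpr hc) (by omega)

lemma rankIn_pos {A : Finset ℤ} {x : ℤ} (hx : x ∈ A) : 1 ≤ rankIn A x := by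
  unfold rankIn
  have : x ∈ A.filter (· ≤ x) := Finset.mem_filter.mpr ⟨hx, le_refl x⟩
  have := Finset.card_pos.mpr ⟨x, this⟩
  exact_mod_cast this

lemma rankIn_le_card (A : Finset ℤ) (x : ℤ) : rankIn A x ≤ (A.card : ℤ) := by
  unfold rankIn
  exact_mod_cast Finset.card_le_card (Finset.filter_subset _ A)

lemma rankIn_surj (A : Finset ℤ) {r : ℤ} (h1 : 1 ≤ r) (h2 : r ≤ (A.card : ℤ)) :
    ∃ a ∈ A, rankIn A a = r := by
  have hcard : (Finset.Icc 1 (A.card : ℤ)).card = A.card := by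
    rw [Int.card_Icc]; omega
  have hmaps : ∀ a ∈ A, rankIn A a ∈ Finset.Icc 1 (A.card : ℤ) := fun a ha =>
    Finset.mem_Icc.mpr ⟨rankIn_pos ha, rankIn_le_card A a⟩
  have := Finset.surj_on_of_inj_on_of_card_le (s := A) (t := Finset.Icc 1 (A.card : ℤ))
    (fun a _ => rankIn A a) (fun a ha => hmaps a ha)
    (fun a b ha hb hab => rankIn_inj ha hb hab) (le_of_eq hcard)
  obtain ⟨a, ha, haa⟩ := this r (Finset.mem_Icc.mpr ⟨h1, h2⟩)
  exact ⟨a, ha, haa.symm⟩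

/-- Inverse of `rankIn A` on `[1, |A|]`. -/
def invA (A : Finset ℤ) (r : ℤ) : ℤ :=
  if h : ∃ a ∈ A, rankIn A a = r then h.choose else 0

lemma invA_spec {A : Finset ℤ} {r : ℤ} (h1 : 1 ≤ r) (h2 : r ≤ (A.card : ℤ)) :
    invA A r ∈ A ∧ rankIn A (invA A r) = r := by
  have h : ∃ a ∈ A, rankIn A a = r := rankIn_surj A h1 h2
  unfold invA
  rw [dif_pos h]
  exact ⟨h.choose_spec.1, h.choose_spec.2⟩

lemma invA_rankIn {A : Finset ℤ} {a : ℤ} (ha : a ∈ A) : invA A (rankIn A a) = a := by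
  obtain ⟨hmem, hrank⟩ := invA_spec (rankIn_pos ha) (rankIn_le_card A a)
  exact rankIn_inj hmem ha hrank

/-- Inverse of `stMap A` on `±[1,|A|]`. -/
def invSt (A : Finset ℤ) (i : ℤ) : ℤ := if 0 < i then invA A i else -(invA A (-i))

lemma mem_pm_bound {A : Finset ℤ} {n : ℕ} (hA : A ⊆ Finset.Icc 1 (n : ℤ)) {x : ℤ}
    (hx : |x| ∈ A) : 1 ≤ |x| ∧ |x| ≤ (n : ℤ) := Finset.mem_Icc.mp (hA hx)

lemma stMap_spec {A : Finset ℤ} {n : ℕ} (hA : A ⊆ Finset.Icc 1 (n : ℤ)) {x : ℤ}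
    (hx : |x| ∈ A) : |stMap A x| = rankIn A |x| ∧ (0 < stMap A x ↔ 0 < x) := by
  have hb := mem_pm_bound hA hx
  have hx0 : x ≠ 0 := by intro h; rw [h] at hb; simp at hb
  rcases lt_trichotomy x 0 with hs | hs | hs
  · have habs : |x| = -x := abs_of_neg hs
    rw [habs] at hx ⊢
    have h1 : 1 ≤ rankIn A (-x) := rankIn_pos hx
    unfold stMap
    rw [if_neg (by omega)]
    constructor
    · rw [abs_of_neg (by omega), neg_neg]
    · omega
  · exact absurd hs hx0
  · have habs : |x| = x := abs_of_pos hs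
    rw [habs] at hx ⊢
    have h1 : 1 ≤ rankIn A x := rankIn_pos hx
    unfold stMap
    rw [if_pos hs]
    constructor
    · rw [abs_of_pos (by omega)]
    · omega

lemma stMap_neg (A : Finset ℤ) {x : ℤ} (hx : x ≠ 0) : stMap A (-x) = -stMap A x := by
  unfold stMap
  rcases lt_trichotomy x 0 with hs | hs | hs
  · rw [if_pos (by omega), if_neg (by omega), neg_neg]
  · exact absurd hs hx
  · rw [if_neg (by omega), neg_neg, if_pos hs]

lemma stMap_inj {A : Finset ℤ} {n : ℕ} (hA : A ⊆ Finset.Icc 1 (n : ℤ)) {x y : ℤ}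
    (hx : |x| ∈ A) (hy : |y| ∈ A) (h : stMap A x = stMap A y) : x = y := by
  obtain ⟨hax, hsx⟩ := stMap_spec hA hx
  obtain ⟨hay, hsy⟩ := stMap_spec hA hy
  have hbx := mem_pm_bound hA hx
  have hby := mem_pm_bound hA hy
  have habs : |x| = |y| := by
    have : rankIn A |x| = rankIn A |y| := by rw [← hax, ← hay, h]
    exact rankIn_inj hx hy this
  have : (0 < x ↔ 0 < y) := by rw [← hsx, ← hsy, h]
  rcases abs_eq_abs.mp habs with he | he
  · exact he
  · omega

lemma posD_stMap_lt {A : Finset ℤ} {n : ℕ} (hA : A ⊆ Finset.Icc 1 (n : ℤ)) {x y : ℤ}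
    (hx : |x| ∈ A) (hy : |y| ∈ A) :
    posD A.card (stMap A x) < posD A.card (stMap A y) ↔ posD n x < posD n y := by
  have hk : (A.card : ℤ) ≤ (n : ℤ) := by
    have h1 := Finset.card_le_card hA
    have h2 : (Finset.Icc 1 (n : ℤ)).card = n := by rw [Int.card_Icc]; omega
    rw [h2] at h1
    exact_mod_cast h1
  have hbx := mem_pm_bound hA hx
  have hby := mem_pm_bound hA hy
  obtain ⟨hax, hsx⟩ := stMap_spec hA hx
  obtain ⟨hay, hsy⟩ := stMap_spec hA hy
  have hrx1 : 1 ≤ rankIn A |x| := rankIn_pos hx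
  have hrx2 : rankIn A |x| ≤ (A.card : ℤ) := rankIn_le_card A _
  have hry1 : 1 ≤ rankIn A |y| := rankIn_pos hy
  have hry2 : rankIn A |y| ≤ (A.card : ℤ) := rankIn_le_card A _
  have hriff : rankIn A |x| < rankIn A |y| ↔ |x| < |y| := rankIn_lt_iff hx hy
  have hriff' : rankIn A |y| < rankIn A |x| ↔ |y| < |x| := rankIn_lt_iff hy hx
  have hx0 : x ≠ 0 := by intro hc; rw [hc] at hbx; simp at hbx
  have hy0 : y ≠ 0 := by intro hc; rw [hc] at hby; simp at hby
  unfold posD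
  rcases lt_trichotomy x 0 with hsx' | hsx' | hsx' <;>
    rcases lt_trichotomy y 0 with hsy' | hsy' | hsy'
  all_goals try omega
  · -- x < 0, y < 0
    have h1 : |x| = -x := abs_of_neg hsx'
    have h2 : |y| = -y := abs_of_neg hsy'
    have h3 : stMap A x = -(rankIn A (-x)) := by unfold stMap; rw [if_neg (by omega)]
    have h4 : stMap A y = -(rankIn A (-y)) := by unfold stMap; rw [if_neg (by omega)]
    rw [h1] at hrx1 hrx2 hriff hriff' hbx
    rw [h2] at hry1 hry2 hriff hriff' hby
    rw [h3, h4, if_neg (by omega), if_neg (by omega), if_neg (by omega), if_neg (by omega)]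
    omega
  · -- x < 0, y > 0
    have h1 : |x| = -x := abs_of_neg hsx'
    have h2 : |y| = y := abs_of_pos hsy'
    have h3 : stMap A x = -(rankIn A (-x)) := by unfold stMap; rw [if_neg (by omega)]
    have h4 : stMap A y = rankIn A y := by unfold stMap; rw [if_pos hsy']
    rw [h1] at hrx1 hrx2 hriff hriff' hbx
    rw [h2] at hry1 hry2 hriff hriff' hby
    rw [h3, h4, if_neg (by omega), if_pos (by omega), if_neg (by omega), if_pos (by omega)]
    omega
  · -- x > 0, y < 0
    have h1 : |x| = x := abs_of_pos hsx'
    have h2 : |y| = -y := abs_of_neg hsy'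
    have h3 : stMap A x = rankIn A x := by unfold stMap; rw [if_pos hsx']
    have h4 : stMap A y = -(rankIn A (-y)) := by unfold stMap; rw [if_neg (by omega)]
    rw [h1] at hrx1 hrx2 hriff hriff' hbx
    rw [h2] at hry1 hry2 hriff hriff' hby
    rw [h3, h4, if_pos (by omega), if_neg (by omega), if_pos (by omega), if_neg (by omega)]
    omega
  · -- x > 0, y > 0
    have h1 : |x| = x := abs_of_pos hsx'
    have h2 : |y| = y := abs_of_pos hsy'
    have h3 : stMap A x = rankIn A x := by unfold stMap; rw [if_pos hsx']
    have h4 : stMap A y = rankIn A y := by unfold stMap; rw [if_pos hsy']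
    rw [h1] at hrx1 hrx2 hriff hriff' hbx
    rw [h2] at hry1 hry2 hriff hriff' hby
    rw [h3, h4, if_pos (by omega), if_pos (by omega), if_pos (by omega), if_pos (by omega)]
    omega

lemma invSt_stMap {A : Finset ℤ} {n : ℕ} (hA : A ⊆ Finset.Icc 1 (n : ℤ)) {x : ℤ}
    (hx : |x| ∈ A) : invSt A (stMap A x) = x := by
  have hb := mem_pm_bound hA hx
  obtain ⟨hax, hsx⟩ := stMap_spec hA hx
  have hr1 : 1 ≤ rankIn A |x| := rankIn_pos hx
  rcases lt_trichotomy x 0 with hs | hs | hs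
  · have h1 : |x| = -x := abs_of_neg hs
    have hstv : stMap A x = -(rankIn A (-x)) := by
      unfold stMap; rw [if_neg (by omega)]
    unfold invSt
    rw [hstv, if_neg (by omega), neg_neg]
    rw [h1] at hx
    rw [invA_rankIn hx, neg_neg]
  · rw [hs] at hb; simp at hb
  · have h1 : |x| = x := abs_of_pos hs
    have hstv : stMap A x = rankIn A x := by
      unfold stMap; rw [if_pos hs]
    unfold invSt
    rw [hstv, if_pos (by rw [← h1] at hs ⊢; omega)]
    rw [h1] at hx
    exact invA_rankIn hx

lemma invSt_spec {A : Finset ℤ} {n : ℕ} (hA : A ⊆ Finset.Icc 1 (n : ℤ)) {r : ℤ}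
    (h1 : 1 ≤ |r|) (h2 : |r| ≤ (A.card : ℤ)) :
    |invSt A r| ∈ A ∧ stMap A (invSt A r) = r ∧ (0 < invSt A r ↔ 0 < r) := by
  rcases lt_trichotomy r 0 with hs | hs | hs
  · have habs : |r| = -r := abs_of_neg hs
    obtain ⟨hmem, hrank⟩ := invA_spec (A := A) (r := -r) (by omega) (by omega)
    have hpos : 1 ≤ invA A (-r) := (Finset.mem_Icc.mp (hA hmem)).1
    have hv : invSt A r = -(invA A (-r)) := by unfold invSt; rw [if_neg (by omega)]
    refine ⟨?_, ?_, by omega⟩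
    · rw [hv, abs_of_neg (by omega), neg_neg]; exact hmem
    · rw [hv]
      unfold stMap
      rw [if_neg (by omega), neg_neg, hrank]
      omega
  · simp [hs] at h1
  · have habs : |r| = r := abs_of_pos hs
    obtain ⟨hmem, hrank⟩ := invA_spec (A := A) (r := r) (by omega) (by omega)
    have hpos : 1 ≤ invA A r := (Finset.mem_Icc.mp (hA hmem)).1
    have hv : invSt A r = invA A r := by unfold invSt; rw [if_pos hs]
    refine ⟨?_, ?_, by omega⟩
    · rw [hv, abs_of_pos (by omega)]; exact hmem
    · rw [hv]
      unfold stMap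
      rw [if_pos (by omega), hrank]

lemma invSt_neg (A : Finset ℤ) {r : ℤ} (hr : r ≠ 0) : invSt A (-r) = -invSt A r := by
  unfold invSt
  rcases lt_trichotomy r 0 with hs | hs | hs
  · rw [if_pos (by omega), if_neg (by omega)]; omega
  · exact absurd hs hr
  · rw [if_neg (by omega), if_pos hs, neg_neg]

/-- Inverse of `stArc`. -/
def unArc {F : Type*} (A : Finset ℤ) : Arc F → Arc F :=
  fun t => (invSt A t.1, invSt A t.2.1, t.2.2)

lemma isD_subset_allArcs {n : ℕ} {ν : Finset (Arc F)} (hν : IsDPartition n ν) :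
    ν ⊆ allArcs F n := by
  intro t ht
  obtain ⟨i, j, a⟩ := t
  obtain ⟨hb1, hb2, hb3, hb4, -⟩ := hν i j a ht
  have hi := abs_le.mp hb2
  have hj := abs_le.mp hb4
  simp only [allArcs, Finset.mem_product, Finset.mem_Icc, Finset.mem_univ, and_true]
  exact ⟨hi, hj⟩

lemma splits_of_subset {A : Finset ℤ} {l ν : Finset (Arc F)} (hsub : l ⊆ ν)
    (hs : Splits A ν) : Splits A l := fun t ht => hs t (hsub ht)

lemma splits_compl {n : ℕ} {A : Finset ℤ} {ν : Finset (Arc F)} (hν : IsDPartition n ν)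
    (hs : Splits A ν) : Splits (Finset.Icc 1 (n : ℤ) \ A) ν := by
  intro t ht
  obtain ⟨i, j, a⟩ := t
  obtain ⟨hb1, hb2, hb3, hb4, -⟩ := hν i j a ht
  have h := hs (i, j, a) ht
  simp only [Finset.mem_sdiff, Finset.mem_Icc] at *
  constructor
  · rintro ⟨-, hna⟩; exact ⟨⟨hb3, hb4⟩, fun hc => hna (h.mpr hc)⟩
  · rintro ⟨-, hna⟩; exact ⟨⟨hb1, hb2⟩, fun hc => hna (h.mp hc)⟩

lemma restrict_mem_pm {A : Finset ℤ} {ν : Finset (Arc F)} :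
    ∀ t ∈ restrictTo A ν, |t.1| ∈ A ∧ |t.2.1| ∈ A :=
  fun t ht => (Finset.mem_filter.mp ht).2

lemma restrictTo_subset (A : Finset ℤ) (ν : Finset (Arc F)) : restrictTo A ν ⊆ ν :=
  Finset.filter_subset _ ν

lemma restrictTo_mono (A : Finset ℤ) {l ν : Finset (Arc F)} (h : l ⊆ ν) :
    restrictTo A l ⊆ restrictTo A ν := Finset.filter_subset_filter _ h

lemma image_unArc_standardize {n : ℕ} {A : Finset ℤ} (hA : A ⊆ Finset.Icc 1 (n : ℤ))
    {m : Finset (Arc F)} (hm : ∀ t ∈ m, |t.1| ∈ A ∧ |t.2.1| ∈ A) :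
    (standardize A m).image (unArc A) = m := by
  unfold standardize
  rw [Finset.image_image]
  have heq : ∀ t ∈ m, (unArc A ∘ stArc A) t = t := by
    intro t ht
    obtain ⟨i, j, a⟩ := t
    obtain ⟨h1, h2⟩ := hm _ ht
    simp only [Function.comp, unArc, stArc]
    rw [invSt_stMap hA h1, invSt_stMap hA h2]
  rw [Finset.image_congr (fun t ht => heq t ht), Finset.image_id']

lemma unArc_mem_pm {n : ℕ} {A : Finset ℤ} (hA : A ⊆ Finset.Icc 1 (n : ℤ))
    {m : Finset (Arc F)} (hm : IsDPartition A.card m) :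
    ∀ t ∈ m.image (unArc A), (|t.1| ∈ A ∧ |t.2.1| ∈ A) ∧
      stArc A t ∈ m ∧ unArc A (stArc A t) = t := by
  intro t ht
  obtain ⟨⟨i, j, a⟩, h0, heq⟩ := Finset.mem_image.mp ht
  obtain ⟨hb1, hb2, hb3, hb4, -⟩ := hm i j a h0
  obtain ⟨hi1, hi2, -⟩ := invSt_spec hA hb1 hb2
  obtain ⟨hj1, hj2, -⟩ := invSt_spec hA hb3 hb4
  subst heq
  refine ⟨⟨hi1, hj1⟩, ?_, ?_⟩
  · show (stMap A (invSt A i), stMap A (invSt A j), a) ∈ m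
    rw [hi2, hj2]; exact h0
  · have hst : stArc A (unArc A (i, j, a)) = (i, j, a) := by
      simp only [unArc, stArc]
      rw [hi2, hj2]
    show unArc A (stArc A (unArc A (i, j, a))) = unArc A (i, j, a)
    rw [hst]

lemma standardize_image_unArc {n : ℕ} {A : Finset ℤ} (hA : A ⊆ Finset.Icc 1 (n : ℤ))
    {m : Finset (Arc F)} (hm : IsDPartition A.card m) :
    standardize A (m.image (unArc A)) = m := by
  unfold standardize
  rw [Finset.image_image]
  have heq : ∀ t ∈ m, (stArc A ∘ unArc A) t = t := by
    intro t ht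
    obtain ⟨i, j, a⟩ := t
    obtain ⟨hb1, hb2, hb3, hb4, -⟩ := hm i j a ht
    obtain ⟨-, hi2, -⟩ := invSt_spec hA hb1 hb2
    obtain ⟨-, hj2, -⟩ := invSt_spec hA hb3 hb4
    simp only [Function.comp, unArc, stArc]
    rw [hi2, hj2]
  rw [Finset.image_congr (fun t ht => heq t ht), Finset.image_id']

lemma isD_standardize {n : ℕ} {A : Finset ℤ} (hA : A ⊆ Finset.Icc 1 (n : ℤ))
    {ν : Finset (Arc F)} (hν : IsDPartition n ν) :
    IsDPartition A.card (standardize A (restrictTo A ν)) := by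
  intro i j a hmem
  obtain ⟨⟨i0, j0, a0⟩, ht, heq⟩ := Finset.mem_image.mp hmem
  simp only [stArc] at heq
  obtain ⟨ht0, hi0, hj0⟩ : (i0, j0, a0) ∈ ν ∧ |i0| ∈ A ∧ |j0| ∈ A := by
    have h' := Finset.mem_filter.mp ht
    exact ⟨h'.1, h'.2.1, h'.2.2⟩
  obtain ⟨hb1, hb2, hb3, hb4, ha0, hord, hnii, hsym, hnc⟩ := hν i0 j0 a0 ht0
  obtain ⟨heq1, heq23⟩ := Prod.mk.injEq .. ▸ heq
  obtain ⟨heq2, heq3⟩ := Prod.mk.injEq .. ▸ heq23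
  subst heq1 heq2 heq3
  obtain ⟨habsi, hsgni⟩ := stMap_spec hA hi0
  obtain ⟨habsj, hsgnj⟩ := stMap_spec hA hj0
  have hi0ne : i0 ≠ 0 := by
    have := mem_pm_bound hA hi0
    intro hc; rw [hc] at this; simp at this
  have hj0ne : j0 ≠ 0 := by
    have := mem_pm_bound hA hj0
    intro hc; rw [hc] at this; simp at this
  refine ⟨?_, ?_, ?_, ?_, ha0, ?_, ?_, ?_, ?_⟩
  · rw [habsi]; exact rankIn_pos hi0
  · rw [habsi]; exact rankIn_le_card A _
  · rw [habsj]; exact rankIn_pos hj0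
  · rw [habsj]; exact rankIn_le_card A _
  · exact (posD_stMap_lt hA hi0 hj0).mpr hord
  · intro hc
    have : stMap A j0 = stMap A (-i0) := by rw [hc, stMap_neg A hi0ne]
    exact hnii (stMap_inj hA hj0 (by rwa [abs_neg]) this)
  · refine Finset.mem_image.mpr ⟨(-j0, -i0, -a0), ?_, ?_⟩
    · exact Finset.mem_filter.mpr ⟨hsym, by rwa [abs_neg], by rwa [abs_neg]⟩
    · simp only [stArc]
      rw [stMap_neg A hj0ne, stMap_neg A hi0ne]
  · intro r b hr1 hr2
    constructor
    · intro hc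
      obtain ⟨⟨i1, r1, b1⟩, ht1, heqc⟩ := Finset.mem_image.mp hc
      simp only [stArc] at heqc
      obtain ⟨hc1, hc23⟩ := Prod.mk.injEq .. ▸ heqc
      obtain ⟨hc2, hc3⟩ := Prod.mk.injEq .. ▸ hc23
      obtain ⟨htν1, hi1, hr1'⟩ : (i1, r1, b1) ∈ ν ∧ |i1| ∈ A ∧ |r1| ∈ A := by
        have h' := Finset.mem_filter.mp ht1
        exact ⟨h'.1, h'.2.1, h'.2.2⟩
      have hii : i1 = i0 := stMap_inj hA hi1 hi0 hc1
      rw [hii, hc3] at htν1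
      have hp1 : posD n i0 < posD n r1 :=
        (posD_stMap_lt hA hi0 hr1').mp (by rw [hc2]; exact hr1)
      have hp2 : posD n r1 < posD n j0 :=
        (posD_stMap_lt hA hr1' hj0).mp (by rw [hc2]; exact hr2)
      exact (hnc r1 b hp1 hp2).1 htν1
    · intro hc
      obtain ⟨⟨r1, j1, b1⟩, ht1, heqc⟩ := Finset.mem_image.mp hc
      simp only [stArc] at heqc
      obtain ⟨hc1, hc23⟩ := Prod.mk.injEq .. ▸ heqc
      obtain ⟨hc2, hc3⟩ := Prod.mk.injEq .. ▸ hc23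
      obtain ⟨htν1, hr1', hj1⟩ : (r1, j1, b1) ∈ ν ∧ |r1| ∈ A ∧ |j1| ∈ A := by
        have h' := Finset.mem_filter.mp ht1
        exact ⟨h'.1, h'.2.1, h'.2.2⟩
      have hjj : j1 = j0 := stMap_inj hA hj1 hj0 hc2
      rw [hjj, hc3] at htν1
      have hp1 : posD n i0 < posD n r1 :=
        (posD_stMap_lt hA hi0 hr1').mp (by rw [hc1]; exact hr1)
      have hp2 : posD n r1 < posD n j0 :=
        (posD_stMap_lt hA hr1' hj0).mp (by rw [hc1]; exact hr2)
      exact (hnc r1 b hp1 hp2).2 htν1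


lemma isD_union_aux {n : ℕ} {A B : Finset ℤ} (hA : A ⊆ Finset.Icc 1 (n : ℤ))
    (hB : B ⊆ Finset.Icc 1 (n : ℤ)) (hdisj : ∀ x, x ∈ A → x ∉ B)
    {μ₁ μ₂ : Finset (Arc F)} (h1 : IsDPartition A.card μ₁) (h2 : IsDPartition B.card μ₂) :
    ∀ i j a, (i, j, a) ∈ μ₁.image (unArc A) →
      1 ≤ |i| ∧ |i| ≤ (n : ℤ) ∧ 1 ≤ |j| ∧ |j| ≤ (n : ℤ) ∧ a ≠ 0 ∧
      posD n i < posD n j ∧ j ≠ -i ∧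
      (-j, -i, -a) ∈ μ₁.image (unArc A) ∪ μ₂.image (unArc B) ∧
      ∀ k b, posD n i < posD n k → posD n k < posD n j →
        (i, k, b) ∉ μ₁.image (unArc A) ∪ μ₂.image (unArc B) ∧
        (k, j, b) ∉ μ₁.image (unArc A) ∪ μ₂.image (unArc B) := by
  intro i j a hmem
  obtain ⟨⟨hiA, hjA⟩, hstm, -⟩ := unArc_mem_pm F hA h1 (i, j, a) hmem
  have hstm' : (stMap A i, stMap A j, a) ∈ μ₁ := hstm
  obtain ⟨pb1, pb2, pb3, pb4, pa0, pord, pnii, psym, pnc⟩ :=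
    h1 (stMap A i) (stMap A j) a hstm'
  have hbi := mem_pm_bound hA hiA
  have hbj := mem_pm_bound hA hjA
  have hine : i ≠ 0 := by intro hc; rw [hc] at hbi; simp at hbi
  have hjne : j ≠ 0 := by intro hc; rw [hc] at hbj; simp at hbj
  have hsmine : stMap A i ≠ 0 := by intro hc; rw [hc] at pb1; simp at pb1
  have hsmjne : stMap A j ≠ 0 := by intro hc; rw [hc] at pb3; simp at pb3
  refine ⟨hbi.1, hbi.2, hbj.1, hbj.2, pa0, ?_, ?_, ?_, ?_⟩
  · exact (posD_stMap_lt hA hiA hjA).mp pord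
  · intro hc
    apply pnii
    rw [hc, stMap_neg A hine]
  · refine Finset.mem_union_left _ (Finset.mem_image.mpr
      ⟨(-(stMap A j), -(stMap A i), -a), psym, ?_⟩)
    show (invSt A (-(stMap A j)), invSt A (-(stMap A i)), -a) = (-j, -i, -a)
    rw [invSt_neg A hsmjne, invSt_neg A hsmine, invSt_stMap hA hiA, invSt_stMap hA hjA]
  · intro r b hr1 hr2
    constructor
    · intro hc
      rcases Finset.mem_union.mp hc with hc' | hc'
      · obtain ⟨⟨-, hrA⟩, hstm2, -⟩ := unArc_mem_pm F hA h1 (i, r, b) hc'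
        have hstm2' : (stMap A i, stMap A r, b) ∈ μ₁ := hstm2
        have hp1 : posD A.card (stMap A i) < posD A.card (stMap A r) :=
          (posD_stMap_lt hA hiA hrA).mpr hr1
        have hp2 : posD A.card (stMap A r) < posD A.card (stMap A j) :=
          (posD_stMap_lt hA hrA hjA).mpr hr2
        exact (pnc (stMap A r) b hp1 hp2).1 hstm2'
      · obtain ⟨⟨hiB, -⟩, -, -⟩ := unArc_mem_pm F hB h2 (i, r, b) hc'
        exact hdisj (|i|) hiA hiB
    · intro hc
      rcases Finset.mem_union.mp hc with hc' | hc'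
      · obtain ⟨⟨hrA, -⟩, hstm2, -⟩ := unArc_mem_pm F hA h1 (r, j, b) hc'
        have hstm2' : (stMap A r, stMap A j, b) ∈ μ₁ := hstm2
        have hp1 : posD A.card (stMap A i) < posD A.card (stMap A r) :=
          (posD_stMap_lt hA hiA hrA).mpr hr1
        have hp2 : posD A.card (stMap A r) < posD A.card (stMap A j) :=
          (posD_stMap_lt hA hrA hjA).mpr hr2
        exact (pnc (stMap A r) b hp1 hp2).2 hstm2'
      · obtain ⟨⟨-, hjB⟩, -, -⟩ := unArc_mem_pm F hB h2 (r, j, b) hc'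
        exact hdisj (|j|) hjA hjB

lemma isD_union {n : ℕ} {A B : Finset ℤ} (hA : A ⊆ Finset.Icc 1 (n : ℤ))
    (hB : B ⊆ Finset.Icc 1 (n : ℤ)) (hdisj : ∀ x, x ∈ A → x ∉ B)
    {μ₁ μ₂ : Finset (Arc F)} (h1 : IsDPartition A.card μ₁) (h2 : IsDPartition B.card μ₂) :
    IsDPartition n (μ₁.image (unArc A) ∪ μ₂.image (unArc B)) := by
  intro i j a hmem
  rcases Finset.mem_union.mp hmem with hm | hm
  · exact isD_union_aux F hA hB hdisj h1 h2 i j a hm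
  · have := isD_union_aux F hB hA (fun x hx hc => hdisj x hc hx) h2 h1 i j a hm
    rwa [Finset.union_comm] at this

lemma restrictTo_union_eq {A : Finset ℤ} {P1 P2 : Finset (Arc F)}
    (h1 : ∀ t ∈ P1, |t.1| ∈ A ∧ |t.2.1| ∈ A) (h2 : ∀ t ∈ P2, |t.1| ∉ A) :
    restrictTo A (P1 ∪ P2) = P1 := by
  unfold restrictTo
  rw [Finset.filter_union, Finset.filter_true_of_mem h1,
    Finset.filter_false_of_mem (fun t ht hc => h2 t ht hc.1), Finset.union_empty]

lemma splits_union_s17 {A : Finset ℤ} {P1 P2 : Finset (Arc F)}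
    (h1 : ∀ t ∈ P1, |t.1| ∈ A ∧ |t.2.1| ∈ A)
    (h2 : ∀ t ∈ P2, |t.1| ∉ A ∧ |t.2.1| ∉ A) : Splits A (P1 ∪ P2) := by
  intro t ht
  rcases Finset.mem_union.mp ht with hm | hm
  · simp [(h1 t hm).1, (h1 t hm).2]
  · simp [(h2 t hm).1, (h2 t hm).2]

lemma restrict_union_eq_self {n : ℕ} {A : Finset ℤ} {l : Finset (Arc F)}
    (hl : IsDPartition n l) (hs : Splits A l) :
    restrictTo A l ∪ restrictTo (Finset.Icc 1 (n : ℤ) \ A) l = l := by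
  apply subset_antisymm
  · exact Finset.union_subset (Finset.filter_subset _ _) (Finset.filter_subset _ _)
  · intro t ht
    obtain ⟨i, j, a⟩ := t
    obtain ⟨hb1, hb2, hb3, hb4, -⟩ := hl i j a ht
    by_cases hc : |i| ∈ A
    · exact Finset.mem_union_left _
        (Finset.mem_filter.mpr ⟨ht, hc, (hs (i, j, a) ht).mp hc⟩)
    · refine Finset.mem_union_right _ (Finset.mem_filter.mpr ⟨ht, ?_, ?_⟩)
      · exact Finset.mem_sdiff.mpr ⟨Finset.mem_Icc.mpr ⟨hb1, hb2⟩, hc⟩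
      · exact Finset.mem_sdiff.mpr ⟨Finset.mem_Icc.mpr ⟨hb3, hb4⟩,
          fun hcc => hc ((hs (i, j, a) ht).mpr hcc)⟩


/-- The finset of all `D_{2n}(q)`-partitions. -/
def Dset (n : ℕ) : Finset (Finset (Arc F)) :=
  ((allArcs F n).powerset).filter (IsDPartition n)

lemma Pelt_eq (n : ℕ) (lam : Finset (Arc F)) :
    Pelt F n lam = ∑ ν ∈ (Dset F n).filter (fun ν => lam ⊆ ν), kelt F n ν := by
  unfold Pelt Dset
  rw [Finset.filter_filter, Finset.sum_filter]
  apply Finset.sum_congr rfl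
  intro μ hμ
  by_cases hp : IsDPartition n μ ∧ lam ⊆ μ
  · rw [dif_pos hp, if_pos hp]
    unfold kelt
    rw [dif_pos hp.1]
  · rw [dif_neg hp, if_neg hp]

lemma mem_Dset {n : ℕ} {ν : Finset (Arc F)} :
    ν ∈ Dset F n ↔ IsDPartition n ν := by
  unfold Dset
  simp only [Finset.mem_filter, Finset.mem_powerset]
  exact ⟨fun h => h.2, fun h => ⟨isD_subset_allArcs F h, h⟩⟩

lemma mobius_inj {M : Type*} [AddCommGroup M] (S : Finset (Finset (Arc F)))
    (g g' : Finset (Arc F) → M)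
    (h : ∀ l ∈ S, ∑ ν ∈ S.filter (fun ν => l ⊆ ν), g ν
        = ∑ ν ∈ S.filter (fun ν => l ⊆ ν), g' ν) :
    ∀ l ∈ S, g l = g' l := by
  have hins : ∀ l ∈ S, S.filter (fun ν => l ⊆ ν)
      = insert l (S.filter (fun ν => l ⊂ ν)) := by
    intro l hl
    ext ν
    simp only [Finset.mem_insert, Finset.mem_filter]
    constructor
    · rintro ⟨hν, hsub⟩
      rcases hsub.ssubset_or_eq with hss | heq
      · exact Or.inr ⟨hν, hss⟩
      · exact Or.inl heq.symm
    · rintro (rfl | ⟨hν, hss⟩)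
      · exact ⟨hl, subset_rfl⟩
      · exact ⟨hν, hss.subset⟩
  have hnm : ∀ l : Finset (Arc F), l ∉ S.filter (fun ν => l ⊂ ν) := by
    intro l hc
    exact ssubset_irrefl l (Finset.mem_filter.mp hc).2
  have key : ∀ m : ℕ, ∀ l ∈ S, (S.filter (fun ν => l ⊂ ν)).card ≤ m → g l = g' l := by
    intro m
    induction m with
    | zero =>
      intro l hl hcard
      have hempty : S.filter (fun ν => l ⊂ ν) = ∅ := by
        rw [← Finset.card_eq_zero]; omega
      have heq := h l hl
      rw [hins l hl, Finset.sum_insert (hnm l), Finset.sum_insert (hnm l), hempty] at heq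
      simpa using heq
    | succ m ih =>
      intro l hl hcard
      have hstrict : ∑ ν ∈ S.filter (fun ν => l ⊂ ν), g ν
          = ∑ ν ∈ S.filter (fun ν => l ⊂ ν), g' ν := by
        apply Finset.sum_congr rfl
        intro ν hν
        obtain ⟨hνS, hνss⟩ := Finset.mem_filter.mp hν
        apply ih ν hνS
        have hsub : S.filter (fun ρ => ν ⊂ ρ) ⊂ S.filter (fun ρ => l ⊂ ρ) := by
          constructor
          · intro ρ hρ
            obtain ⟨hρS, hρss⟩ := Finset.mem_filter.mp hρ
            exact Finset.mem_filter.mpr ⟨hρS, hνss.trans hρss⟩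
          · intro hcc
            have : ν ∈ S.filter (fun ρ => ν ⊂ ρ) := hcc hν
            exact ssubset_irrefl ν (Finset.mem_filter.mp this).2
        have := Finset.card_lt_card hsub
        omega
      have heq := h l hl
      rw [hins l hl, Finset.sum_insert (hnm l), Finset.sum_insert (hnm l), hstrict] at heq
      exact add_right_cancel heq
  intro l hl
  exact key (S.filter (fun ν => l ⊂ ν)).card l hl le_rfl


lemma key_inner {n : ℕ} {l : Finset (Arc F)} (hl : IsDPartition n l) {A : Finset ℤ}
    (hA : A ⊆ Finset.Icc 1 (n : ℤ)) (hspl : Splits A l) :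
    ∑ ν ∈ (Dset F n).filter (fun ν => l ⊆ ν ∧ Splits A ν),
      (kelt F A.card (standardize A (restrictTo A ν)) ⊗ₜ[ℂ]
        kelt F (n - A.card)
          (standardize (Finset.Icc 1 (n : ℤ) \ A) (restrictTo (Finset.Icc 1 (n : ℤ) \ A) ν)))
    = Pelt F A.card (standardize A (restrictTo A l)) ⊗ₜ[ℂ]
      Pelt F (n - A.card)
        (standardize (Finset.Icc 1 (n : ℤ) \ A) (restrictTo (Finset.Icc 1 (n : ℤ) \ A) l)) := by
  set B : Finset ℤ := Finset.Icc 1 (n : ℤ) \ A with hBdef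
  have hB : B ⊆ Finset.Icc 1 (n : ℤ) := Finset.sdiff_subset
  have hIccCard : (Finset.Icc 1 (n : ℤ)).card = n := by rw [Int.card_Icc]; omega
  have hBcard : B.card = n - A.card := by rw [hBdef, Finset.card_sdiff_of_subset hA, hIccCard]
  have hdisj : ∀ x, x ∈ A → x ∉ B := fun x hx hc => (Finset.mem_sdiff.mp hc).2 hx
  have hdisj' : ∀ x, x ∈ B → x ∉ A := fun x hx => (Finset.mem_sdiff.mp hx).2
  rw [Pelt_eq, Pelt_eq, TensorProduct.sum_tmul]
  simp only [TensorProduct.tmul_sum]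
  rw [← Finset.sum_product']
  apply Finset.sum_nbij'
    (i := fun ν => (standardize A (restrictTo A ν), standardize B (restrictTo B ν)))
    (j := fun p => p.1.image (unArc A) ∪ p.2.image (unArc B))
  · -- hi
    intro ν hν
    obtain ⟨hνD', hlν, hsν⟩ : ν ∈ Dset F n ∧ l ⊆ ν ∧ Splits A ν := by
      have := Finset.mem_filter.mp hν
      exact ⟨this.1, this.2.1, this.2.2⟩
    have hνD := (mem_Dset F).mp hνD'
    refine Finset.mem_product.mpr ⟨?_, ?_⟩
    · refine Finset.mem_filter.mpr ⟨(mem_Dset F).mpr (isD_standardize F hA hνD), ?_⟩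
      exact Finset.image_subset_image (restrictTo_mono F A hlν)
    · have hstd := isD_standardize F hB hνD
      rw [hBcard] at hstd
      refine Finset.mem_filter.mpr ⟨(mem_Dset F).mpr hstd, ?_⟩
      exact Finset.image_subset_image (restrictTo_mono F B hlν)
  · -- hj
    intro p hp
    obtain ⟨hp1, hp2⟩ := Finset.mem_product.mp hp
    obtain ⟨hp1D', hsub1⟩ := Finset.mem_filter.mp hp1
    obtain ⟨hp2D', hsub2⟩ := Finset.mem_filter.mp hp2
    have hμ₁D : IsDPartition A.card p.1 := (mem_Dset F).mp hp1D'
    have hμ₂D : IsDPartition B.card p.2 := by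
      rw [hBcard]; exact (mem_Dset F).mp hp2D'
    refine Finset.mem_filter.mpr ⟨(mem_Dset F).mpr (isD_union F hA hB hdisj hμ₁D hμ₂D),
      ?_, ?_⟩
    · have hcover : restrictTo A l ∪ restrictTo B l = l := restrict_union_eq_self F hl hspl
      rw [← hcover]
      have h1 : restrictTo A l = (standardize A (restrictTo A l)).image (unArc A) :=
        (image_unArc_standardize F hA (restrict_mem_pm F)).symm
      have h2 : restrictTo B l = (standardize B (restrictTo B l)).image (unArc B) :=
        (image_unArc_standardize F hB (restrict_mem_pm F)).symm
      rw [h1, h2]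
      exact Finset.union_subset_union (Finset.image_subset_image hsub1)
        (Finset.image_subset_image hsub2)
    · apply splits_union_s17 F
      · intro t ht
        exact (unArc_mem_pm F hA hμ₁D t ht).1
      · intro t ht
        have hmem := (unArc_mem_pm F hB hμ₂D t ht).1
        exact ⟨hdisj' _ hmem.1, hdisj' _ hmem.2⟩
  · -- left inverse
    intro ν hν
    obtain ⟨hνD', hlν, hsν⟩ : ν ∈ Dset F n ∧ l ⊆ ν ∧ Splits A ν := by
      have := Finset.mem_filter.mp hν
      exact ⟨this.1, this.2.1, this.2.2⟩
    have hνD := (mem_Dset F).mp hνD'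
    show (standardize A (restrictTo A ν)).image (unArc A)
        ∪ (standardize B (restrictTo B ν)).image (unArc B) = ν
    rw [image_unArc_standardize F hA (restrict_mem_pm F),
      image_unArc_standardize F hB (restrict_mem_pm F)]
    exact restrict_union_eq_self F hνD hsν
  · -- right inverse
    intro p hp
    obtain ⟨hp1, hp2⟩ := Finset.mem_product.mp hp
    obtain ⟨hp1D', hsub1⟩ := Finset.mem_filter.mp hp1
    obtain ⟨hp2D', hsub2⟩ := Finset.mem_filter.mp hp2
    have hμ₁D : IsDPartition A.card p.1 := (mem_Dset F).mp hp1D'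
    have hμ₂D : IsDPartition B.card p.2 := by
      rw [hBcard]; exact (mem_Dset F).mp hp2D'
    have e1 : restrictTo A (p.1.image (unArc A) ∪ p.2.image (unArc B))
        = p.1.image (unArc A) :=
      restrictTo_union_eq F (fun t ht => (unArc_mem_pm F hA hμ₁D t ht).1)
        (fun t ht => hdisj' _ ((unArc_mem_pm F hB hμ₂D t ht).1).1)
    have e2 : restrictTo B (p.1.image (unArc A) ∪ p.2.image (unArc B))
        = p.2.image (unArc B) := by
      rw [Finset.union_comm]
      exact restrictTo_union_eq F (fun t ht => (unArc_mem_pm F hB hμ₂D t ht).1)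
        (fun t ht => hdisj _ ((unArc_mem_pm F hA hμ₁D t ht).1).1)
    show (standardize A (restrictTo A (p.1.image (unArc A) ∪ p.2.image (unArc B))),
        standardize B (restrictTo B (p.1.image (unArc A) ∪ p.2.image (unArc B)))) = p
    rw [e1, e2, standardize_image_unArc F hA hμ₁D, standardize_image_unArc F hB hμ₂D]
  · -- values
    intro ν hν
    rfl

lemma keyA {n : ℕ} {l : Finset (Arc F)} (hl : IsDPartition n l) :
    ∑ ν ∈ (Dset F n).filter (fun ν => l ⊆ ν),
      (∑ A ∈ (Finset.Icc 1 (n : ℤ)).powerset, if Splits A ν then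
        kelt F A.card (standardize A (restrictTo A ν)) ⊗ₜ[ℂ]
          kelt F (n - A.card)
            (standardize (Finset.Icc 1 (n : ℤ) \ A) (restrictTo (Finset.Icc 1 (n : ℤ) \ A) ν))
        else 0)
    = DeltaP F n l := by
  rw [Finset.sum_comm]
  unfold DeltaP
  apply Finset.sum_congr rfl
  intro A hA'
  have hA : A ⊆ Finset.Icc 1 (n : ℤ) := Finset.mem_powerset.mp hA'
  by_cases hspl : Splits A l
  · rw [if_pos hspl, ← Finset.sum_filter, Finset.filter_filter]
    exact key_inner F hl hA hspl
  · rw [if_neg hspl]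
    apply Finset.sum_eq_zero
    intro ν hν
    obtain ⟨-, hsub⟩ := Finset.mem_filter.mp hν
    rw [if_neg (fun hc => hspl (splits_of_subset F hsub hc))]


end Aux

/-- if `Δ` is a linear map agreeing on the `P`-basis with
`Δ(P_λ) = Σ_A P_{st_A(λ|_A)} ⊗ P_{st_{Aᶜ}(λ|_{Aᶜ})}`, then (via Möbius inversion of
`P_λ = Σ_{μ ≥ λ} κ_μ`) its values on the `κ`-basis are
`Δ(κ_λ) = Σ_{A ⊆ [n], λ = λ|_A ⊔ λ|_{Aᶜ}} κ_{st_A(λ|_A)} ⊗ κ_{st_{Aᶜ}(λ|_{Aᶜ})}`. -/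
theorem Delta_kappa (Delta : SCtot F →ₗ[ℂ] SCtot F ⊗[ℂ] SCtot F)
    (hDelta : ∀ (n : ℕ) (lam : Finset (Arc F)), IsDPartition n lam →
      Delta (Pelt F n lam) = DeltaP F n lam)
    (n : ℕ) (lam : Finset (Arc F)) (h : IsDPartition n lam) :
    Delta (kelt F n lam)
      = ∑ A ∈ (Icc 1 (n : ℤ)).powerset,
          if Splits A lam then
            kelt F A.card (standardize A (restrictTo A lam)) ⊗ₜ[ℂ]
              kelt F (n - A.card)
                (standardize (Icc 1 (n : ℤ) \ A) (restrictTo (Icc 1 (n : ℤ) \ A) lam))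
          else 0 := by
  refine mobius_inj F (Dset F n) (fun ν => Delta (kelt F n ν))
    (fun ν => ∑ A ∈ (Finset.Icc 1 (n : ℤ)).powerset, if Splits A ν then
      kelt F A.card (standardize A (restrictTo A ν)) ⊗ₜ[ℂ]
        kelt F (n - A.card)
          (standardize (Finset.Icc 1 (n : ℤ) \ A) (restrictTo (Finset.Icc 1 (n : ℤ) \ A) ν))
      else 0) ?_ lam ((mem_Dset F).mpr h)
  intro l hl
  have hlD := (mem_Dset F).mp hl
  rw [← map_sum, ← Pelt_eq, hDelta n l hlD]
  exact (keyA F hlD).symm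
end
end
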